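/- arXiv:1809.09539 — 2 statements merged into one kernel-verified Lean document; each statement's English description precedes it below -/
import Mathlib

section
/- Let (K, v) be a rank one valued field and let E = {s_n} be a pseudo-convergent sequence that is of transcendental type, or of algebraic type with nonzero breadth ideal. Then the map w_E(φ) = lim_{n→∞} v(φ(s_n)) is a well-defined rank one valuation on K(X) extending v, and the valuation ring W_E of w_E contains V_E = {φ : φ(s_n) ∈ V for almost all n}. -/
/-!
For a nonzero polynomial `f`, the values `v (f (s n))` converge to a real number. In the
transcendental case they are eventually constant, and finite because `s` is injective. In the
algebraic case, take a valuation ring of an algebraic closure lying over that of `v` and split `f`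
there: each `s n - a` eventually has constant value or the value `γ n` of the gauge
`s (n + 1) - s n`, so `f (s n) / (s (n + 1) - s n) ^ k` has eventually constant value upstairs,
hence downstairs, i.e. `v (f (s n)) = C + k • γ n`; this converges because the gauge is bounded.
Writing `φ = num / denom` extends the convergence to rational functions, and the valuation axioms
for `w_E φ = lim v (φ (s n))` are limits of those of `v`.
-/

open Filter

section

open Topology Polynomial

namespace Valuation

variable {R Γ₀ : Type*} [LinearOrderedCommMonoidWithZero Γ₀]

def IsPseudoConvergent [Ring R] (v : Valuation R Γ₀) (s : ℕ → R) : Prop :=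
  ∀ n, v (s (n + 2) - s (n + 1)) < v (s (n + 1) - s n)

namespace IsPseudoConvergent

section Ring

variable [Ring R] {v : Valuation R Γ₀} {s : ℕ → R} (hs : v.IsPseudoConvergent s)
include hs

theorem strictAnti : StrictAnti fun n => v (s (n + 1) - s n) :=
  strictAnti_nat_of_succ_lt hs

theorem map_sub_ne_zero (n : ℕ) : v (s (n + 1) - s n) ≠ 0 :=
  (zero_le.trans_lt (hs n)).ne'

theorem map_sub_of_lt {m n : ℕ} (h : m < n) : v (s n - s m) = v (s (m + 1) - s m) := by
  induction n, h using Nat.le_induction with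
  | base => rfl
  | succ n hmn ih =>
    rw [← sub_add_sub_cancel _ (s n), Valuation.map_add_eq_of_lt_right _ (by
      rw [ih]; exact hs.strictAnti hmn), ih]

theorem injective : Function.Injective s := by
  intro m n hmn
  by_contra hne
  wlog h : m < n generalizing m n
  · exact this hmn.symm (Ne.symm hne) ((Ne.symm hne).lt_of_le (not_lt.1 h))
  exact hs.map_sub_ne_zero m (by rw [← hs.map_sub_of_lt h, hmn, sub_self, map_zero])

theorem eventually_map_sub_eq_or (a : R) :
    (∃ c, ∀ᶠ n in atTop, v (s n - a) = c) ∨ ∀ n, v (s n - a) = v (s (n + 1) - s n) := by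
  by_cases hfar : ∃ N, v (s (N + 1) - s N) < v (s N - a)
  · obtain ⟨N, hN⟩ := hfar
    refine Or.inl ⟨v (s N - a), eventually_atTop.2 ⟨N, fun n hn => ?_⟩⟩
    induction n, hn using Nat.le_induction with
    | base => rfl
    | succ n hNn ih =>
      rw [← sub_add_sub_cancel _ (s n), Valuation.map_add_eq_of_lt_right _ (by
        rw [ih]; exact (hs.strictAnti.antitone hNn).trans_lt hN), ih]
  · push Not at hfar
    refine Or.inr fun n => le_antisymm (hfar n) ?_
    by_contra! hlt
    have hnext : v (s (n + 1) - a) < v (s (n + 1) - s n) := (hfar (n + 1)).trans_lt (hs n)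
    have := v.map_sub (s (n + 1) - a) (s n - a)
    rw [sub_sub_sub_cancel_right] at this
    exact (this.trans_lt (max_lt hnext hlt)).false

end Ring

theorem exists_eventually_map_prod_sub [CommRing R] {v : Valuation R Γ₀} {s : ℕ → R}
    (hs : v.IsPseudoConvergent s) (M : Multiset R) :
    ∃ (c : Γ₀) (k : ℕ), ∀ᶠ n in atTop,
      v (M.map fun a => s n - a).prod = c * v (s (n + 1) - s n) ^ k := by
  induction M using Multiset.induction with
  | empty => exact ⟨1, 0, by simp⟩
  | cons a M ih =>
    obtain ⟨c, k, hM⟩ := ih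
    simp only [Multiset.map_cons, Multiset.prod_cons, map_mul]
    rcases hs.eventually_map_sub_eq_or a with ⟨d, ha⟩ | ha
    · refine ⟨d * c, k, ?_⟩
      filter_upwards [ha, hM] with n han hMn
      rw [han, hMn, mul_assoc]
    · refine ⟨c, k + 1, ?_⟩
      filter_upwards [hM] with n hMn
      rw [ha, hMn, pow_succ', mul_left_comm]

theorem exists_eventually_map_eval_eq {K : Type*} [Field K] {v : Valuation K Γ₀} {s : ℕ → K}
    (hs : v.IsPseudoConvergent s) {p : K[X]} (hp : p.Splits) :
    ∃ (c : Γ₀) (k : ℕ), ∀ᶠ n in atTop, v (p.eval (s n)) = c * v (s (n + 1) - s n) ^ k := by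
  obtain ⟨c, k, hroots⟩ := hs.exists_eventually_map_prod_sub p.roots
  refine ⟨v p.leadingCoeff * c, k, ?_⟩
  filter_upwards [hroots] with n hn
  conv_lhs => rw [← C_leadingCoeff_mul_prod_multiset_X_sub_C (splits_iff_card_roots.1 hp)]
  rw [eval_mul, eval_C, eval_multiset_prod, Multiset.map_map, map_mul, mul_assoc, ← hn]
  simp

end IsPseudoConvergent

end Valuation

theorem ValuationSubring.exists_comap_eq {K L : Type*} [Field K] [Field L]
    (V : ValuationSubring K) (f : K →+* L) : ∃ A : ValuationSubring L, A.comap f = V := by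
  obtain ⟨A, hVA, hloc⟩ := IsLocalRing.exists_factor_valuationRing (f.comp V.subtype)
  refine ⟨A, le_antisymm (fun x (hx : f x ∈ A) => ?_) fun x hx => hVA ⟨x, hx⟩⟩
  by_contra hxV
  have hx0 : x ≠ 0 := by rintro rfl; exact hxV V.zero_mem
  have hinv : x⁻¹ ∈ V := (V.mem_or_inv_mem x).resolve_left hxV
  have hunit : IsUnit (⟨x⁻¹, hinv⟩ : V) := hloc.map_nonunit _ <|
    isUnit_iff_exists_inv.2 ⟨⟨f x, hx⟩, Subtype.ext <| by simp [hx0]⟩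
  obtain ⟨y, hy⟩ := isUnit_iff_exists_inv.1 hunit
  have hyx : (y : K) = x :=
    ((inv_mul_eq_one₀ hx0).1 (by simpa using congrArg Subtype.val hy)).symm
  exact hxV (hyx ▸ y.2)

theorem WithTop.tendsto_nhds_coe_iff {α ι : Type*} [LinearOrder ι] [TopologicalSpace ι]
    [OrderTopology ι] {l : Filter α} {x : α → WithTop ι} {a : ι} :
    Tendsto x l (𝓝 (a : WithTop ι)) ↔ ∃ r : α → ι, (∀ᶠ i in l, x i = r i) ∧ Tendsto r l (𝓝 a) := by
  refine ⟨fun hx => ⟨fun i => (x i).untopD a, ?_, ?_⟩, fun ⟨r, hxr, hr⟩ => ?_⟩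
  · filter_upwards [hx.eventually_ne coe_ne_top] with i hi
    obtain ⟨y, hy⟩ := ne_top_iff_exists.1 hi
    simp [← hy]
  · have := (tendsto_untopD a coe_ne_top).comp hx
    rwa [untopD_coe] at this
  · exact ((continuous_coe.tendsto a).comp hr).congr' (hxr.mono fun _ h => h.symm)

theorem WithTop.exists_tendsto_coe_of_monotone {ι : Type*} [ConditionallyCompleteLinearOrder ι]
    [TopologicalSpace ι] [OrderTopology ι] {x : ℕ → WithTop ι} (hx : Monotone x) {B : WithTop ι}
    (hB : B ≠ ⊤) (hxB : ∀ n, x n ≤ B) : ∃ G : ι, Tendsto x atTop (𝓝 (G : WithTop ι)) := by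
  lift ⨆ n, x n to ι using ((ciSup_le hxB).trans_lt hB.lt_top).ne with G hG
  exact ⟨G, hG ▸ tendsto_atTop_ciSup hx ⟨B, Set.forall_mem_range.2 hxB⟩⟩

theorem Polynomial.eventually_eval_ne_zero {K : Type*} [Field K] {s : ℕ → K}
    (hs : Function.Injective s) {f : K[X]} (hf : f ≠ 0) : ∀ᶠ n in atTop, f.eval (s n) ≠ 0 := by
  rw [← Nat.cofinite_eq_atTop, eventually_cofinite]
  refine (f.roots.finite_toSet.preimage hs.injOn).subset fun n hn => ?_
  simpa [mem_roots hf] using hn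

namespace AddValuation

section LinearOrderedAddCommGroupWithTop

variable {K Γ₀ : Type*} [Field K] [LinearOrderedAddCommGroupWithTop Γ₀] {v : AddValuation K Γ₀}
  {s : ℕ → K}

theorem isPseudoConvergent_toValuation_iff :
    v.toValuation.IsPseudoConvergent s ↔ ∀ n, v (s (n + 1) - s n) < v (s (n + 2) - s (n + 1)) := by
  simp [Valuation.IsPseudoConvergent, toValuation_apply]

theorem toValuation_eq_iff {x y : K} : v.toValuation x = v.toValuation y ↔ v x = v y := by
  simp [toValuation_apply]

theorem isEquiv_comap_of_comap_eq {L : Type*} [Field L] {f : K →+* L} {A : ValuationSubring L}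
    (hA : A.comap f = v.toValuation.valuationSubring) :
    (A.valuation.comap f).IsEquiv v.toValuation := by
  rw [Valuation.isEquiv_iff_valuationSubring, ← hA]
  ext x
  simp [ValuationSubring.valuation_le_one_iff]

theorem exists_eventually_eval_eq_add_nsmul_of_isEquiv {L Γ : Type*} [Field L] [IsAlgClosed L]
    [LinearOrderedCommGroupWithZero Γ] {i : K →+* L} {w : Valuation L Γ}
    (hw : (w.comap i).IsEquiv v.toValuation) (hs : v.toValuation.IsPseudoConvergent s)
    (f : K[X]) :
    ∃ (C : Γ₀) (k : ℕ), ∀ᶠ n in atTop, v (f.eval (s n)) = C + k • v (s (n + 1) - s n) := by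
  have ht : w.IsPseudoConvergent (i ∘ s) := fun n => by
    simpa only [Valuation.comap_apply, _root_.map_sub, Function.comp_apply]
      using hw.lt_iff_lt.2 (hs n)
  obtain ⟨c, k, hev⟩ := ht.exists_eventually_map_eval_eq (IsAlgClosed.splits (f.map i))
  let q n := f.eval (s n) / (s (n + 1) - s n) ^ k
  have hq : ∀ᶠ n in atTop, w.comap i (q n) = c := by
    filter_upwards [hev] with n hn
    simp only [Function.comp_apply, eval_map, eval₂_at_apply] at hn
    simp only [q, Valuation.comap_apply, map_div₀, _root_.map_pow, _root_.map_sub, hn]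
    exact mul_div_cancel_right₀ _ (pow_ne_zero _ (ht.map_sub_ne_zero n))
  obtain ⟨N, hN⟩ := eventually_atTop.1 hq
  refine ⟨v (q N), k, eventually_atTop.2 ⟨N, fun n hn => ?_⟩⟩
  have hqn : v (q n) = v (q N) :=
    toValuation_eq_iff.1 (hw.eq_iff.1 ((hN n hn).trans (hN N le_rfl).symm))
  have hd : s (n + 1) - s n ≠ 0 := sub_ne_zero.2 (hs.injective.ne (by omega))
  rw [← hqn, ← v.map_pow, ← v.map_mul, div_mul_cancel₀ _ (pow_ne_zero _ hd)]

theorem exists_eventually_eval_eq_add_nsmul (hs : v.toValuation.IsPseudoConvergent s)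
    (f : K[X]) :
    ∃ (C : Γ₀) (k : ℕ), ∀ᶠ n in atTop, v (f.eval (s n)) = C + k • v (s (n + 1) - s n) := by
  obtain ⟨A, hA⟩ :=
    v.toValuation.valuationSubring.exists_comap_eq (algebraMap K (AlgebraicClosure K))
  exact exists_eventually_eval_eq_add_nsmul_of_isEquiv (isEquiv_comap_of_comap_eq hA) hs f

end LinearOrderedAddCommGroupWithTop

variable {K : Type*} [Field K] {v : AddValuation K (WithTop ℝ)} {s : ℕ → K}

theorem exists_tendsto_of_eventually_const (hs : Function.Injective s) {f : K[X]} (hf : f ≠ 0)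
    (hconst : ∃ c, ∀ᶠ n in atTop, v (f.eval (s n)) = c) :
    ∃ L : ℝ, Tendsto (fun n => v (f.eval (s n))) atTop (𝓝 (L : WithTop ℝ)) := by
  obtain ⟨c, hc⟩ := hconst
  obtain ⟨N, hcN, hN⟩ := (hc.and (eventually_eval_ne_zero hs hf)).exists
  lift c to ℝ using hcN ▸ v.ne_top_iff.2 hN
  exact ⟨c, tendsto_const_nhds.congr' (hc.mono fun _ h => h.symm)⟩

theorem exists_tendsto_of_bddAbove (hs : v.toValuation.IsPseudoConvergent s) {b : K}
    (hb : b ≠ 0) (hbdd : ∀ n, v (s (n + 1) - s n) < v b) {f : K[X]} (hf : f ≠ 0) :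
    ∃ L : ℝ, Tendsto (fun n => v (f.eval (s n))) atTop (𝓝 (L : WithTop ℝ)) := by
  obtain ⟨G, hG⟩ := WithTop.exists_tendsto_coe_of_monotone
    (strictMono_nat_of_lt_succ (isPseudoConvergent_toValuation_iff.1 hs)).monotone
    (v.ne_top_iff.2 hb) fun n => (hbdd n).le
  obtain ⟨g, hγg, hg⟩ := WithTop.tendsto_nhds_coe_iff.1 hG
  obtain ⟨C, k, hC⟩ := exists_eventually_eval_eq_add_nsmul hs f
  obtain ⟨N, hCN, hN⟩ := (hC.and (eventually_eval_ne_zero hs.injective hf)).exists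
  lift C to ℝ using (WithTop.add_ne_top.1 (hCN ▸ v.ne_top_iff.2 hN)).1
  refine ⟨C + k * G, WithTop.tendsto_nhds_coe_iff.2 ⟨fun n => C + k * g n, ?_, ?_⟩⟩
  · filter_upwards [hC, hγg] with n hCn hγn
    rw [hCn, hγn, ← WithTop.coe_nsmul, ← WithTop.coe_add, nsmul_eq_mul]
  · exact tendsto_const_nhds.add (hg.const_mul _)

variable (v s) in
noncomputable def limEval (φ : RatFunc K) : WithTop ℝ :=
  limUnder atTop fun n => v (φ.eval (RingHom.id K) (s n))

variable (hpoly : ∀ f : K[X], f ≠ 0 →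
  ∃ L : ℝ, Tendsto (fun n => v (f.eval (s n))) atTop (𝓝 (L : WithTop ℝ)))
include hpoly

theorem eventually_eval_denom_ne_zero (φ : RatFunc K) :
    ∀ᶠ n in atTop, φ.denom.eval (s n) ≠ 0 := by
  obtain ⟨L, hL⟩ := hpoly _ φ.denom_ne_zero
  exact (hL.eventually_ne WithTop.coe_ne_top).mono fun n => v.ne_top_iff.1

theorem exists_tendsto_eval_ratFunc {φ : RatFunc K} (hφ : φ ≠ 0) :
    ∃ L : ℝ, Tendsto (fun n => v (φ.eval (RingHom.id K) (s n))) atTop (𝓝 (L : WithTop ℝ)) := by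
  obtain ⟨a, hnum⟩ := hpoly _ (RatFunc.num_ne_zero hφ)
  obtain ⟨b, hdenom⟩ := hpoly _ φ.denom_ne_zero
  obtain ⟨r, hr, hra⟩ := WithTop.tendsto_nhds_coe_iff.1 hnum
  obtain ⟨r', hr', hr'b⟩ := WithTop.tendsto_nhds_coe_iff.1 hdenom
  refine ⟨a - b, WithTop.tendsto_nhds_coe_iff.2 ⟨r - r', ?_, hra.sub hr'b⟩⟩
  filter_upwards [hr, hr'] with n hn hn'
  rw [RatFunc.eval, eval₂_id, eval₂_id, v.map_div, hn, hn', Pi.sub_apply,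
    WithTop.LinearOrderedAddCommGroup.coe_sub]

theorem tendsto_limEval (φ : RatFunc K) :
    Tendsto (fun n => v (φ.eval (RingHom.id K) (s n))) atTop (𝓝 (v.limEval s φ)) := by
  refine tendsto_nhds_limUnder ?_
  rcases eq_or_ne φ 0 with rfl | hφ
  · exact ⟨⊤, by simp⟩
  · obtain ⟨L, hL⟩ := exists_tendsto_eval_ratFunc hpoly hφ
    exact ⟨L, hL⟩

theorem limEval_eq_of_eventually_eq {φ : RatFunc K} {c : WithTop ℝ}
    (h : ∀ᶠ n in atTop, v (φ.eval (RingHom.id K) (s n)) = c) : v.limEval s φ = c :=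
  tendsto_nhds_unique (tendsto_limEval hpoly φ)
    (tendsto_const_nhds.congr' (h.mono fun _ h => h.symm))

theorem limEval_zero : v.limEval s 0 = ⊤ :=
  limEval_eq_of_eventually_eq hpoly (by simp)

theorem exists_limEval_eq_coe {φ : RatFunc K} (hφ : φ ≠ 0) : ∃ L : ℝ, v.limEval s φ = L := by
  obtain ⟨L, hL⟩ := exists_tendsto_eval_ratFunc hpoly hφ
  exact ⟨L, tendsto_nhds_unique (tendsto_limEval hpoly φ) hL⟩

theorem limEval_mul (φ ψ : RatFunc K) :
    v.limEval s (φ * ψ) = v.limEval s φ + v.limEval s ψ := by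
  rcases eq_or_ne φ 0 with rfl | hφ
  · simp [limEval_zero hpoly]
  rcases eq_or_ne ψ 0 with rfl | hψ
  · simp [limEval_zero hpoly]
  obtain ⟨a, ha⟩ := exists_limEval_eq_coe hpoly hφ
  obtain ⟨b, hb⟩ := exists_limEval_eq_coe hpoly hψ
  obtain ⟨r, hr, hra⟩ := WithTop.tendsto_nhds_coe_iff.1 (ha ▸ tendsto_limEval hpoly φ)
  obtain ⟨r', hr', hr'b⟩ := WithTop.tendsto_nhds_coe_iff.1 (hb ▸ tendsto_limEval hpoly ψ)
  rw [ha, hb, ← WithTop.coe_add]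
  refine tendsto_nhds_unique (tendsto_limEval hpoly _)
    (WithTop.tendsto_nhds_coe_iff.2 ⟨r + r', ?_, hra.add hr'b⟩)
  filter_upwards [hr, hr', eventually_eval_denom_ne_zero hpoly φ,
    eventually_eval_denom_ne_zero hpoly ψ] with n hn hn' hφn hψn
  rw [RatFunc.eval_mul (RingHom.id K) (s n) hφn hψn, v.map_mul, hn, hn', Pi.add_apply,
    WithTop.coe_add]

theorem limEval_add (φ ψ : RatFunc K) :
    min (v.limEval s φ) (v.limEval s ψ) ≤ v.limEval s (φ + ψ) := by
  refine le_of_tendsto_of_tendsto ((tendsto_limEval hpoly φ).min (tendsto_limEval hpoly ψ))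
    (tendsto_limEval hpoly _) ?_
  filter_upwards [eventually_eval_denom_ne_zero hpoly φ,
    eventually_eval_denom_ne_zero hpoly ψ] with n hφn hψn
  rw [RatFunc.eval_add (RingHom.id K) (s n) hφn hψn]
  exact v.map_add _ _

/-- The valuation `w_E`. -/
noncomputable def limValuation : AddValuation (RatFunc K) (WithTop ℝ) :=
  AddValuation.of (v.limEval s) (limEval_zero hpoly) (limEval_eq_of_eventually_eq hpoly (by simp))
    (limEval_add hpoly) (limEval_mul hpoly)

end AddValuation

end

/-- Membership in V_E: φ(s_n) is defined and lies in V for all but finitely many n. -/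
def memVE {K : Type*} [Field K]
    (v : AddValuation K (WithTop ℝ)) (s : ℕ → K) (φ : RatFunc K) : Prop :=
  ∀ᶠ n in atTop, (RatFunc.denom φ).eval (s n) ≠ 0 ∧
    0 ≤ v (RatFunc.eval (RingHom.id K) (s n) φ)

/-- For E pseudo-convergent of transcendental type, or of algebraic type with
nonzero breadth ideal, the map w_E(φ) = lim v(φ(s_n)) is a well-defined rank one
valuation on K(X) extending v, whose valuation ring W_E contains V_E. -/
theorem stmt13 {K : Type*} [Field K] (v : AddValuation K (WithTop ℝ)) (s : ℕ → K)
    (hE : ∀ n, v (s (n + 1) - s n) < v (s (n + 2) - s (n + 1)))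
    (htype : (∀ f : Polynomial K, ∃ c : WithTop ℝ, ∀ᶠ n in atTop, v (f.eval (s n)) = c)
      ∨ ((∃ f : Polynomial K, ∃ N, ∀ n ≥ N, v (f.eval (s n)) < v (f.eval (s (n + 1)))) ∧
          ∃ b : K, b ≠ 0 ∧ ∀ n, v (s (n + 1) - s n) < v b)) :
    ∃ w : AddValuation (RatFunc K) (WithTop ℝ),
      (∀ c : K, w (RatFunc.C c) = v c) ∧
      (∀ φ : RatFunc K, φ ≠ 0 → ∃ L : ℝ, w φ = (L : WithTop ℝ) ∧
        Tendsto (fun n => WithTop.untopD 0 (v (RatFunc.eval (RingHom.id K) (s n) φ)))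
          atTop (nhds L)) ∧
      (∀ φ : RatFunc K, memVE v s φ → 0 ≤ w φ) := by
  have hs : v.toValuation.IsPseudoConvergent s :=
    AddValuation.isPseudoConvergent_toValuation_iff.2 hE
  have hpoly : ∀ f : Polynomial K, f ≠ 0 →
      ∃ L : ℝ, Tendsto (fun n => v (f.eval (s n))) atTop (nhds (L : WithTop ℝ)) := by
    rcases htype with htrans | ⟨-, b, hb, hbdd⟩
    · exact fun f hf => AddValuation.exists_tendsto_of_eventually_const hs.injective hf (htrans f)
    · exact fun f hf => AddValuation.exists_tendsto_of_bddAbove hs hb hbdd hf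
  refine ⟨v.limValuation hpoly, fun c => AddValuation.limEval_eq_of_eventually_eq hpoly (by simp),
    fun φ hφ => ?_, fun φ hφ => ge_of_tendsto (AddValuation.tendsto_limEval hpoly φ)
      (hφ.mono fun _ h => h.2)⟩
  obtain ⟨L, hL⟩ := AddValuation.exists_limEval_eq_coe hpoly hφ
  refine ⟨L, hL, ?_⟩
  have := (WithTop.tendsto_untopD 0 WithTop.coe_ne_top).comp
    (hL ▸ AddValuation.tendsto_limEval hpoly φ)
  rwa [WithTop.untopD_coe] at this
end

section
/- Let (K, v) be a rank one valued field, E ⊂ K a pseudo-convergent sequence of algebraic type with finite breadth δ such that δ is torsion over Γ_v (i.e. kδ ∈ Γ_v for some k ≥ 1) and E has a pseudo-limit β ∈ K. Then V_E ≠ W_E; in particular there exists c ∈ K with v(c) = kδ such that (X-β)^k / c ∈ W_E \ V_E. -/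
/-!
Since β is a pseudo-limit, v(s n - β) = δₙ, so the value of (X - β)^k / c at s n is
k δₙ - k δ = k (δₙ - δ). This is negative for every n, because δₙ increases strictly to δ,
so the rational function is never in V_E; but it tends to 0, which puts it in W_E.
-/

open Filter

theorem AddValuation.map_sub_eq_of_lt_sub {R Γ₀ : Type*} [Ring R]
    [LinearOrderedAddCommMonoidWithTop Γ₀] (v : AddValuation R Γ₀) {a b β : R}
    (h : v (β - a) < v (β - b)) : v (b - a) = v (β - a) := by
  rw [← sub_sub_sub_cancel_left a b β, v.map_sub_eq_of_lt_left h]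

theorem RatFunc.eval_X_sub_C_pow_div_C {K : Type*} [Field K] (β c x : K) (k : ℕ) :
    RatFunc.eval (RingHom.id K) x ((RatFunc.X - RatFunc.C β) ^ k / RatFunc.C c)
      = (x - β) ^ k / c := by
  have hpoly : (RatFunc.X - RatFunc.C β) ^ k / RatFunc.C c
      = algebraMap (Polynomial K) (RatFunc K)
        ((Polynomial.X - Polynomial.C β) ^ k * Polynomial.C c⁻¹) := by
    rw [map_mul, map_pow, map_sub, RatFunc.algebraMap_X, RatFunc.algebraMap_C,
      RatFunc.algebraMap_C, map_inv₀, div_eq_mul_inv]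
  rw [hpoly, RatFunc.eval_algebraMap]
  simp [div_eq_mul_inv]

theorem AddValuation.map_pow_div_eq_coe_real {K : Type*} [Field K]
    (v : AddValuation K (WithTop ℝ)) {a c : K} {k : ℕ} {d e : ℝ}
    (ha : v a = d) (hc : v c = ((k * e : ℝ) : WithTop ℝ)) :
    v (a ^ k / c) = ((k * (d - e) : ℝ) : WithTop ℝ) := by
  rw [v.map_div, v.map_pow, ha, hc, ← WithTop.coe_nsmul, nsmul_eq_mul, ← WithTop.LinearOrderedAddCommGroup.coe_sub,
    mul_sub]

theorem stmt14_general {K : Type*} [Field K] (v : AddValuation K (WithTop ℝ)) (s : ℕ → K)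
    (δn : ℕ → ℝ) (δ : ℝ) (β : K) (k : ℕ) (hk : 1 ≤ k)
    (hgauge : ∀ n, v (s (n + 1) - s n) = (δn n : WithTop ℝ))
    (hmono : StrictMono δn) (hlim : Tendsto δn atTop (nhds δ))
    (hβ : ∀ n, v (β - s n) < v (β - s (n + 1)))
    (htors : ∃ x : K, x ≠ 0 ∧ v x = ((k * δ : ℝ) : WithTop ℝ)) :
    ∃ c : K, c ≠ 0 ∧ v c = ((k * δ : ℝ) : WithTop ℝ) ∧
      (∀ r : ℝ, r < 0 → ∀ᶠ n in atTop, (r : WithTop ℝ) <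
        v (RatFunc.eval (RingHom.id K) (s n)
          ((RatFunc.X - RatFunc.C β) ^ k / RatFunc.C c))) ∧
      ¬ memVE v s ((RatFunc.X - RatFunc.C β) ^ k / RatFunc.C c) := by
  obtain ⟨c, hc0, hcv⟩ := htors
  have hval : ∀ n, v (RatFunc.eval (RingHom.id K) (s n)
      ((RatFunc.X - RatFunc.C β) ^ k / RatFunc.C c)) = ((k * (δn n - δ) : ℝ) : WithTop ℝ) := by
    intro n
    have hdist : v (s n - β) = δn n := by
      rw [v.map_sub_swap, ← v.map_sub_eq_of_lt_sub (hβ n), hgauge]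
    rw [RatFunc.eval_X_sub_C_pow_div_C, v.map_pow_div_eq_coe_real hdist hcv]
  have hk0 : (0 : ℝ) < k := by exact_mod_cast hk
  refine ⟨c, hc0, hcv, fun r hr => ?_, fun hV => ?_⟩
  · have hto : Tendsto (fun n => (k : ℝ) * (δn n - δ)) atTop (nhds 0) := by
      simpa using (hlim.sub_const δ).const_mul (k : ℝ)
    filter_upwards [hto.eventually (eventually_gt_nhds hr)] with n hn
    rw [hval n]
    exact_mod_cast hn
  · obtain ⟨n, -, hn⟩ := hV.exists
    have hδn : δn n < δ :=
      (hmono n.lt_succ_self).trans_le (hmono.monotone.ge_of_tendsto hlim _)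
    rw [hval n] at hn
    have : 0 ≤ (k : ℝ) * (δn n - δ) := by exact_mod_cast hn
    nlinarith

/-- If E is of algebraic type with finite breadth δ torsion over Γ_v (kδ ∈ Γ_v,
k ≥ 1) and pseudo-limit β ∈ K, then V_E ≠ W_E: there is c ∈ K with v(c) = kδ and
(X - β)^k/c ∈ W_E \ V_E (membership in W_E stated as lim v(φ(s_n)) ≥ 0, i.e. for
every r < 0 eventually r < v(φ(s_n))). -/
theorem stmt14 {K : Type*} [Field K] (v : AddValuation K (WithTop ℝ)) (s : ℕ → K)
    (δn : ℕ → ℝ) (δ : ℝ) (β : K) (k : ℕ) (hk : 1 ≤ k)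
    (hgauge : ∀ n, v (s (n + 1) - s n) = (δn n : WithTop ℝ))
    (hmono : StrictMono δn) (hlim : Tendsto δn atTop (nhds δ))
    (halg : ∃ f : Polynomial K, ∃ N, ∀ n ≥ N, v (f.eval (s n)) < v (f.eval (s (n + 1))))
    (hβ : ∀ n, v (β - s n) < v (β - s (n + 1)))
    (htors : ∃ x : K, x ≠ 0 ∧ v x = ((k * δ : ℝ) : WithTop ℝ)) :
    ∃ c : K, c ≠ 0 ∧ v c = ((k * δ : ℝ) : WithTop ℝ) ∧
      (∀ r : ℝ, r < 0 → ∀ᶠ n in atTop, (r : WithTop ℝ) <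
        v (RatFunc.eval (RingHom.id K) (s n)
          ((RatFunc.X - RatFunc.C β) ^ k / RatFunc.C c))) ∧
      ¬ memVE v s ((RatFunc.X - RatFunc.C β) ^ k / RatFunc.C c) :=
  stmt14_general v s δn δ β k hk hgauge hmono hlim hβ htors
end
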